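/- For each n ∈ ℕ and s ∈ {1,…,k}, let μ_s^{(n)} and μ_s be probability measures on ℝ with finite second moments, and let (π_s^{(n)})_{s} and (π_s)_s be probability vectors on {1,…,k} with all entries strictly positive. Define ν̄_n as the pushforward of Unif(0,1) under u ↦ Σ_{s=1}^k π_s^{(n)} F_{μ_s^{(n)}}⁻¹(u), and ν̄ as the pushforward of Unif(0,1) under u ↦ Σ_{s=1}^k π_s F_{μ_s}⁻¹(u). If W₂(μ_s^{(n)}, μ_s) → 0 and π_s^{(n)} → π_s as n → ∞ for every s ∈ {1,…,k}, then W₂(ν̄_n, ν̄) → 0. (Continuity of the one-dimensional Wasserstein barycenter, the consistency mechanism underlying Theorem 3.) -/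

import Mathlib

open MeasureTheory ProbabilityTheory Filter

/-- Squared 2-Wasserstein distance between measures on ℝ: infimum of ∫|x−y|² dγ over
couplings γ of P and Q. -/
noncomputable def W2sq (P Q : Measure ℝ) : ℝ :=
  sInf { c : ℝ | ∃ γ : Measure (ℝ × ℝ),
    γ.map Prod.fst = P ∧ γ.map Prod.snd = Q ∧ c = ∫ z, (z.1 - z.2) ^ 2 ∂γ }

/-- 2-Wasserstein distance: square root of `W2sq`. -/
noncomputable def W2 (P Q : Measure ℝ) : ℝ := Real.sqrt (W2sq P Q)

/-- CDF of a measure on ℝ. -/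
noncomputable def cdf' (μ : Measure ℝ) (x : ℝ) : ℝ := (μ (Set.Iic x)).toReal

/-- Quantile function of a measure on ℝ: `F_μ⁻¹(u) = inf {x : F_μ(x) ≥ u}`. -/
noncomputable def quantile' (μ : Measure ℝ) (u : ℝ) : ℝ := sInf { x : ℝ | u ≤ cdf' μ x }

/-- Uniform distribution on (0,1): Lebesgue measure restricted to (0,1). -/
noncomputable def unif01 : Measure ℝ := volume.restrict (Set.Ioo 0 1)

/-!
In dimension one the quantile coupling is optimal for the quadratic cost. By Hoeffding's
identity, the mixed moment `∫ x y dγ` of a coupling `γ` is an integral of the masses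
`γ((s,∞) × (t,∞))` (up to terms fixed by the marginals), and the quantile coupling maximises
every one of them (Fréchet–Hoeffding bound). Hence `‖F_P⁻¹ - F_Q⁻¹‖_{L²(0,1)} ≤ W₂(P, Q)`, while
`W₂` between two push-forwards of `Unif(0,1)` is at most the `L²` distance of the maps. The
barycenter's transport map `∑ π_s F_{μ_s}⁻¹` depends continuously in `L²` on the weights and the
quantile functions, so `W₂(ν̄_n, ν̄) → 0`.
-/

open Topology

section Quantile

lemma bddBelow_le_cdf (μ : Measure ℝ) {u : ℝ} (hu : 0 < u) : BddBelow {x | u ≤ cdf μ x} := by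
  obtain ⟨x₀, hx₀⟩ := ((tendsto_cdf_atBot μ).eventually (eventually_lt_nhds hu)).exists
  exact ⟨x₀, fun y hy => le_of_not_gt fun hyx => (hy.trans (monotone_cdf μ hyx.le)).not_gt hx₀⟩

lemma nonempty_le_cdf (μ : Measure ℝ) {u : ℝ} (hu : u < 1) : {x | u ≤ cdf μ x}.Nonempty :=
  ((tendsto_cdf_atTop μ).eventually (eventually_ge_nhds hu)).exists

@[simp] lemma cdf'_eq_cdf (μ : Measure ℝ) [IsProbabilityMeasure μ] : cdf' μ = cdf μ := by
  funext x; rw [cdf_eq_real]; rfl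

variable {μ : Measure ℝ} [IsProbabilityMeasure μ]

lemma quantile'_eq_sInf (u : ℝ) : quantile' μ u = sInf {x | u ≤ cdf μ x} := by
  simp [quantile']

lemma le_cdf_quantile' {u : ℝ} (hu : u < 1) : u ≤ cdf μ (quantile' μ u) := by
  have above : ∀ᶠ y in 𝓝[>] (quantile' μ u), u ≤ cdf μ y := by
    filter_upwards [self_mem_nhdsWithin] with y hy
    rw [quantile'_eq_sInf] at hy
    obtain ⟨z, hz, hzy⟩ := exists_lt_of_csInf_lt (nonempty_le_cdf μ hu) hy
    exact hz.trans (monotone_cdf μ hzy.le)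
  exact ge_of_tendsto (((cdf μ).right_continuous _).mono Set.Ioi_subset_Ici_self) above

lemma quantile'_le_iff {u x : ℝ} (hu : u ∈ Set.Ioo 0 1) :
    quantile' μ u ≤ x ↔ u ≤ cdf μ x :=
  ⟨fun h => (le_cdf_quantile' hu.2).trans (monotone_cdf μ h),
    fun h => (quantile'_eq_sInf (μ := μ) u).symm ▸ csInf_le (bddBelow_le_cdf μ hu.1) h⟩

lemma lt_quantile'_iff {u x : ℝ} (hu : u ∈ Set.Ioo 0 1) :
    x < quantile' μ u ↔ cdf μ x < u := by
  simpa only [not_le] using (quantile'_le_iff hu).not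

lemma monotoneOn_quantile' : MonotoneOn (quantile' μ) (Set.Ioo 0 1) := fun _ hu _ hv huv =>
  (quantile'_le_iff hu).2 (huv.trans (le_cdf_quantile' hv.2))

lemma aemeasurable_quantile' : AEMeasurable (quantile' μ) unif01 :=
  aemeasurable_restrict_of_monotoneOn measurableSet_Ioo monotoneOn_quantile'

instance : IsProbabilityMeasure unif01 :=
  ⟨by simp [unif01, Real.volume_Ioo]⟩

lemma unif01_Iic {c : ℝ} (h1 : c ≤ 1) : unif01 (Set.Iic c) = ENNReal.ofReal c := by
  rw [unif01, Measure.restrict_congr_set Ioo_ae_eq_Ioc, Measure.restrict_apply measurableSet_Iic,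
    Set.Iic_inter_Ioc_of_le h1, Real.volume_Ioc, sub_zero]

lemma unif01_congr_set {A B : Set ℝ} (h : ∀ u ∈ Set.Ioo (0 : ℝ) 1, u ∈ A ↔ u ∈ B) :
    unif01 A = unif01 B := by
  simp only [unif01, Measure.restrict_apply' measurableSet_Ioo]
  congr 1
  ext u
  exact and_congr_left (h u)

lemma map_quantile'_unif01 : unif01.map (quantile' μ) = μ := by
  have : IsProbabilityMeasure (unif01.map (quantile' μ)) :=
    Measure.isProbabilityMeasure_map aemeasurable_quantile'
  refine Measure.ext_of_Iic _ _ fun x => ?_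
  rw [Measure.map_apply_of_aemeasurable aemeasurable_quantile' measurableSet_Iic,
    ← ofReal_cdf, ← unif01_Iic (cdf_le_one μ x)]
  exact unif01_congr_set fun u hu => quantile'_le_iff hu

lemma memLp_quantile' (h2 : MemLp id 2 μ) : MemLp (quantile' μ) 2 unif01 :=
  (map_quantile'_unif01 (μ := μ) ▸ h2).comp_of_map aemeasurable_quantile'

end Quantile

/-- `x = ∫ s, layer x s`: the layer-cake representation of a signed real number. -/
noncomputable def layer (x s : ℝ) : ℝ := (Set.Ioi s).indicator 1 x - (Set.Ioi s).indicator 1 0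

lemma measurable_layer : Measurable fun p : ℝ × ℝ => layer p.1 p.2 := by
  simp only [layer, Set.indicator_apply, Set.mem_Ioi, Pi.one_apply]
  exact (measurable_const.ite (measurableSet_lt measurable_snd measurable_fst) measurable_const).sub
    (measurable_const.ite (measurableSet_lt measurable_snd measurable_const) measurable_const)

lemma layer_eq_indicator (x : ℝ) :
    layer x = (Set.Ico 0 x).indicator 1 - (Set.Ico x 0).indicator 1 := by
  funext s
  simp only [layer, Pi.sub_apply, Set.indicator_apply, Set.mem_Ico, Set.mem_Ioi, Pi.one_apply]
  split_ifs <;> grind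

lemma abs_layer_eq_indicator (x : ℝ) :
    (fun s => |layer x s|) = (Set.Ico 0 x).indicator 1 + (Set.Ico x 0).indicator 1 := by
  funext s
  simp only [layer, Pi.add_apply, Set.indicator_apply, Set.mem_Ico, Set.mem_Ioi, Pi.one_apply]
  split_ifs <;> grind

lemma integrable_indicator_one_Ico (a b : ℝ) : Integrable ((Set.Ico a b).indicator (1 : ℝ → ℝ)) :=
  (integrableOn_const (by simp)).integrable_indicator measurableSet_Ico

lemma integrable_layer (x : ℝ) : Integrable (layer x) :=
  layer_eq_indicator x ▸ (integrable_indicator_one_Ico _ _).sub (integrable_indicator_one_Ico _ _)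

lemma integral_layer (x : ℝ) : ∫ s, layer x s = x := by
  rw [layer_eq_indicator,
    integral_sub' (integrable_indicator_one_Ico _ _) (integrable_indicator_one_Ico _ _),
    integral_indicator_one measurableSet_Ico, integral_indicator_one measurableSet_Ico,
    Real.volume_real_Ico, Real.volume_real_Ico, sub_zero, zero_sub,
    max_zero_sub_max_neg_zero_eq_self]

lemma integral_abs_layer (x : ℝ) : ∫ s, |layer x s| = |x| := by
  rw [abs_layer_eq_indicator,
    integral_add' (integrable_indicator_one_Ico _ _) (integrable_indicator_one_Ico _ _),
    integral_indicator_one measurableSet_Ico, integral_indicator_one measurableSet_Ico,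
    Real.volume_real_Ico, Real.volume_real_Ico, sub_zero, zero_sub,
    max_zero_add_max_neg_zero_eq_abs_self]

lemma integral_layer_fst_mul_layer_snd (γ : Measure (ℝ × ℝ)) [IsFiniteMeasure γ] (s t : ℝ) :
    ∫ z, layer z.1 s * layer z.2 t ∂γ = γ.real (Set.Ioi s ×ˢ Set.Ioi t)
      - (Set.Ioi t).indicator 1 0 * (γ.map Prod.fst).real (Set.Ioi s)
      - (Set.Ioi s).indicator 1 0 * (γ.map Prod.snd).real (Set.Ioi t)
      + (Set.Ioi s).indicator 1 0 * (Set.Ioi t).indicator 1 0 * γ.real Set.univ := by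
  set c : ℝ := (Set.Ioi s).indicator 1 0
  set d : ℝ := (Set.Ioi t).indicator 1 0
  have hq : MeasurableSet (Set.Ioi s ×ˢ Set.Ioi t) := measurableSet_Ioi.prod measurableSet_Ioi
  have iq : Integrable (fun z : ℝ × ℝ => (Set.Ioi s ×ˢ Set.Ioi t).indicator 1 z) γ :=
    (integrable_const (1 : ℝ)).indicator hq
  have i₁ : Integrable (fun z : ℝ × ℝ => (Set.Ioi s).indicator 1 z.1) γ :=
    ((integrable_const (1 : ℝ)).indicator measurableSet_Ioi).comp_measurable measurable_fst
  have i₂ : Integrable (fun z : ℝ × ℝ => (Set.Ioi t).indicator 1 z.2) γ :=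
    ((integrable_const (1 : ℝ)).indicator measurableSet_Ioi).comp_measurable measurable_snd
  have expand : ∀ z : ℝ × ℝ, layer z.1 s * layer z.2 t = (Set.Ioi s ×ˢ Set.Ioi t).indicator 1 z
      - d * (Set.Ioi s).indicator 1 z.1 - c * (Set.Ioi t).indicator 1 z.2 + c * d := by
    rintro ⟨x, y⟩
    rw [layer, layer, Set.indicator_prod_one]
    ring
  simp_rw [expand]
  rw [integral_add, integral_sub, integral_sub, integral_const_mul, integral_const_mul,
    integral_indicator_one hq,
    ← integral_map (f := (Set.Ioi s).indicator (1 : ℝ → ℝ)) measurable_fst.aemeasurable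
      (aestronglyMeasurable_const.indicator measurableSet_Ioi),
    ← integral_map (f := (Set.Ioi t).indicator (1 : ℝ → ℝ)) measurable_snd.aemeasurable
      (aestronglyMeasurable_const.indicator measurableSet_Ioi),
    integral_indicator_one measurableSet_Ioi, integral_indicator_one measurableSet_Ioi,
    integral_const, smul_eq_mul, mul_comm (γ.real _)]
  all_goals fun_prop

lemma integral_layer_mul_layer (x y : ℝ) : ∫ w : ℝ × ℝ, layer x w.1 * layer y w.2 = x * y := by
  rw [Measure.volume_eq_prod, integral_prod_mul, integral_layer, integral_layer]

lemma integrable_layer_mul_layer_prod (γ : Measure (ℝ × ℝ)) [SFinite γ]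
    (h : Integrable (fun z : ℝ × ℝ => z.1 * z.2) γ) :
    Integrable (Function.uncurry fun z w : ℝ × ℝ => layer z.1 w.1 * layer z.2 w.2)
      (γ.prod volume) := by
  have hmeas : Measurable (Function.uncurry fun z w : ℝ × ℝ => layer z.1 w.1 * layer z.2 w.2) :=
    (measurable_layer.comp (measurable_fst.fst.prodMk measurable_snd.fst)).mul
      (measurable_layer.comp (measurable_fst.snd.prodMk measurable_snd.snd))
  refine (integrable_prod_iff hmeas.aestronglyMeasurable).2 ⟨ae_of_all _ fun z => ?_, ?_⟩
  · rw [Measure.volume_eq_prod]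
    exact (integrable_layer z.1).mul_prod (integrable_layer z.2)
  · refine h.norm.congr (ae_of_all _ fun z => ?_)
    simp only [Function.uncurry_apply_pair, norm_mul, Real.norm_eq_abs]
    rw [Measure.volume_eq_prod, integral_prod_mul (fun a => |layer z.1 a|) (fun b => |layer z.2 b|),
      integral_abs_layer, integral_abs_layer]

lemma integral_mul_eq_integral_integral_layer (γ : Measure (ℝ × ℝ)) [SFinite γ]
    (h : Integrable (fun z : ℝ × ℝ => z.1 * z.2) γ) :
    ∫ z, z.1 * z.2 ∂γ = ∫ w : ℝ × ℝ, ∫ z, layer z.1 w.1 * layer z.2 w.2 ∂γ := by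
  calc ∫ z, z.1 * z.2 ∂γ = ∫ z, (∫ w : ℝ × ℝ, layer z.1 w.1 * layer z.2 w.2) ∂γ := by
        simp only [integral_layer_mul_layer]
    _ = ∫ w : ℝ × ℝ, ∫ z, layer z.1 w.1 * layer z.2 w.2 ∂γ :=
        integral_integral_swap (integrable_layer_mul_layer_prod γ h)

lemma integral_mul_le_of_measure_prod_Ioi_le {γ γ' : Measure (ℝ × ℝ)} [IsFiniteMeasure γ]
    [IsFiniteMeasure γ'] (h₁ : γ.map Prod.fst = γ'.map Prod.fst)
    (h₂ : γ.map Prod.snd = γ'.map Prod.snd) (hγ : Integrable (fun z : ℝ × ℝ => z.1 * z.2) γ)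
    (hγ' : Integrable (fun z : ℝ × ℝ => z.1 * z.2) γ')
    (hle : ∀ s t, γ (Set.Ioi s ×ˢ Set.Ioi t) ≤ γ' (Set.Ioi s ×ˢ Set.Ioi t)) :
    ∫ z, z.1 * z.2 ∂γ ≤ ∫ z, z.1 * z.2 ∂γ' := by
  have huniv : γ.real Set.univ = γ'.real Set.univ := by
    simpa [map_measureReal_apply measurable_fst MeasurableSet.univ] using
      congrArg (fun m => m.real Set.univ) h₁
  rw [integral_mul_eq_integral_integral_layer γ hγ, integral_mul_eq_integral_integral_layer γ' hγ']
  refine integral_mono (integrable_layer_mul_layer_prod γ hγ).integral_prod_right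
    (integrable_layer_mul_layer_prod γ' hγ').integral_prod_right fun w => ?_
  have hquad := ENNReal.toReal_mono (measure_ne_top γ' _) (hle w.1 w.2)
  dsimp only
  rw [integral_layer_fst_mul_layer_snd, integral_layer_fst_mul_layer_snd, h₁, h₂, huniv]
  simp only [measureReal_def]
  linarith

section Coupling

variable {P Q : Measure ℝ} {γ : Measure (ℝ × ℝ)}

lemma integrable_mul_of_map_eq (h₁ : γ.map Prod.fst = P) (h₂ : γ.map Prod.snd = Q)
    (hP : MemLp id 2 P) (hQ : MemLp id 2 Q) : Integrable (fun z : ℝ × ℝ => z.1 * z.2) γ :=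
  ((h₁ ▸ hP).comp_of_map measurable_fst.aemeasurable).integrable_mul
    ((h₂ ▸ hQ).comp_of_map measurable_snd.aemeasurable)

lemma integral_sub_sq_of_map_eq (h₁ : γ.map Prod.fst = P) (h₂ : γ.map Prod.snd = Q)
    (hP : MemLp id 2 P) (hQ : MemLp id 2 Q) :
    ∫ z, (z.1 - z.2) ^ 2 ∂γ = ∫ x, x ^ 2 ∂P + ∫ y, y ^ 2 ∂Q - 2 * ∫ z, z.1 * z.2 ∂γ := by
  have i₁ := ((h₁ ▸ hP).comp_of_map measurable_fst.aemeasurable).integrable_sq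
  have i₂ := ((h₂ ▸ hQ).comp_of_map measurable_snd.aemeasurable).integrable_sq
  have i₁₂ := (integrable_mul_of_map_eq h₁ h₂ hP hQ).const_mul 2
  simp only [Function.comp_apply, id] at i₁ i₂
  calc ∫ z, (z.1 - z.2) ^ 2 ∂γ = ∫ z, (z.1 ^ 2 + z.2 ^ 2) - 2 * (z.1 * z.2) ∂γ :=
        integral_congr_ae (ae_of_all _ fun z => by ring)
    _ = _ := by
      rw [integral_sub (by fun_prop) i₁₂, integral_add i₁ i₂, integral_const_mul, ← h₁, ← h₂,
        integral_map measurable_fst.aemeasurable (by fun_prop),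
        integral_map measurable_snd.aemeasurable (by fun_prop)]

end Coupling

section QuantileCoupling

/-- The comonotone coupling of `P` and `Q`. -/
noncomputable def quantileCoupling (P Q : Measure ℝ) : Measure (ℝ × ℝ) :=
  unif01.map fun u => (quantile' P u, quantile' Q u)

variable {P Q : Measure ℝ} [IsProbabilityMeasure P] [IsProbabilityMeasure Q] {γ : Measure (ℝ × ℝ)}

lemma aemeasurable_quantile'_prodMk :
    AEMeasurable (fun u => (quantile' P u, quantile' Q u)) unif01 :=
  aemeasurable_quantile'.prodMk aemeasurable_quantile'

instance : IsProbabilityMeasure (quantileCoupling P Q) :=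
  Measure.isProbabilityMeasure_map aemeasurable_quantile'_prodMk

lemma map_fst_quantileCoupling : (quantileCoupling P Q).map Prod.fst = P := by
  rw [quantileCoupling, AEMeasurable.map_map_of_aemeasurable measurable_fst.aemeasurable
    aemeasurable_quantile'_prodMk]
  exact map_quantile'_unif01

lemma map_snd_quantileCoupling : (quantileCoupling P Q).map Prod.snd = Q := by
  rw [quantileCoupling, AEMeasurable.map_map_of_aemeasurable measurable_snd.aemeasurable
    aemeasurable_quantile'_prodMk]
  exact map_quantile'_unif01

lemma measure_prod_Ioi_le_quantileCoupling (h₁ : γ.map Prod.fst = P) (h₂ : γ.map Prod.snd = Q)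
    (s t : ℝ) : γ (Set.Ioi s ×ˢ Set.Ioi t) ≤ quantileCoupling P Q (Set.Ioi s ×ˢ Set.Ioi t) := by
  rw [quantileCoupling, Measure.map_apply_of_aemeasurable aemeasurable_quantile'_prodMk
    (measurableSet_Ioi.prod measurableSet_Ioi)]
  rcases le_total (cdf Q t) (cdf P s) with h | h
  · calc γ (Set.Ioi s ×ˢ Set.Ioi t) ≤ γ (Prod.fst ⁻¹' Set.Ioi s) := measure_mono fun z hz => hz.1
      _ = unif01 (quantile' P ⁻¹' Set.Ioi s) := by
        rw [← Measure.map_apply measurable_fst measurableSet_Ioi, h₁,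
          ← Measure.map_apply_of_aemeasurable aemeasurable_quantile' measurableSet_Ioi,
          map_quantile'_unif01]
      _ = _ := unif01_congr_set fun u hu => by
        simp only [Set.mem_preimage, Set.mem_Ioi, Set.mem_prod, lt_quantile'_iff hu]
        exact ⟨fun hs => ⟨hs, h.trans_lt hs⟩, And.left⟩
  · calc γ (Set.Ioi s ×ˢ Set.Ioi t) ≤ γ (Prod.snd ⁻¹' Set.Ioi t) := measure_mono fun z hz => hz.2
      _ = unif01 (quantile' Q ⁻¹' Set.Ioi t) := by
        rw [← Measure.map_apply measurable_snd measurableSet_Ioi, h₂,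
          ← Measure.map_apply_of_aemeasurable aemeasurable_quantile' measurableSet_Ioi,
          map_quantile'_unif01]
      _ = _ := unif01_congr_set fun u hu => by
        simp only [Set.mem_preimage, Set.mem_Ioi, Set.mem_prod, lt_quantile'_iff hu]
        exact ⟨fun ht => ⟨h.trans_lt ht, ht⟩, And.right⟩

lemma integral_sub_sq_quantileCoupling :
    ∫ z, (z.1 - z.2) ^ 2 ∂quantileCoupling P Q = ∫ u, (quantile' P u - quantile' Q u) ^ 2 ∂unif01 :=
  integral_map aemeasurable_quantile'_prodMk (by fun_prop)

lemma integral_quantile'_sub_sq_le (hP : MemLp id 2 P) (hQ : MemLp id 2 Q)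
    (h₁ : γ.map Prod.fst = P) (h₂ : γ.map Prod.snd = Q) :
    ∫ u, (quantile' P u - quantile' Q u) ^ 2 ∂unif01 ≤ ∫ z, (z.1 - z.2) ^ 2 ∂γ := by
  have : IsProbabilityMeasure (γ.map Prod.fst) := h₁ ▸ ‹_›
  have : IsProbabilityMeasure γ := Measure.isProbabilityMeasure_of_map Prod.fst
  have cross := integral_mul_le_of_measure_prod_Ioi_le
    (h₁.trans map_fst_quantileCoupling.symm) (h₂.trans map_snd_quantileCoupling.symm)
    (integrable_mul_of_map_eq h₁ h₂ hP hQ)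
    (integrable_mul_of_map_eq map_fst_quantileCoupling map_snd_quantileCoupling hP hQ)
    (measure_prod_Ioi_le_quantileCoupling h₁ h₂)
  rw [← integral_sub_sq_quantileCoupling, integral_sub_sq_of_map_eq h₁ h₂ hP hQ,
    integral_sub_sq_of_map_eq map_fst_quantileCoupling map_snd_quantileCoupling hP hQ]
  linarith

end QuantileCoupling

section Wasserstein

lemma integral_quantile'_sub_sq_le_W2sq (P Q : Measure ℝ) [IsProbabilityMeasure P]
    [IsProbabilityMeasure Q] (hP : MemLp id 2 P) (hQ : MemLp id 2 Q) :
    ∫ u, (quantile' P u - quantile' Q u) ^ 2 ∂unif01 ≤ W2sq P Q :=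
  le_csInf ⟨_, quantileCoupling P Q, map_fst_quantileCoupling, map_snd_quantileCoupling, rfl⟩
    fun _ ⟨_, h₁, h₂, hc⟩ => hc ▸ integral_quantile'_sub_sq_le hP hQ h₁ h₂

variable {α : Type*} [MeasurableSpace α] {μ : Measure α}

lemma W2sq_map_le {f g : α → ℝ} (hf : AEMeasurable f μ) (hg : AEMeasurable g μ) :
    W2sq (μ.map f) (μ.map g) ≤ ∫ a, (f a - g a) ^ 2 ∂μ := by
  have hfg : AEMeasurable (fun a => (f a, g a)) μ := hf.prodMk hg
  refine csInf_le ⟨0, ?_⟩ ⟨μ.map fun a => (f a, g a), ?_, ?_, ?_⟩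
  · rintro _ ⟨γ, -, -, rfl⟩
    exact integral_nonneg fun z => sq_nonneg _
  · rw [AEMeasurable.map_map_of_aemeasurable measurable_fst.aemeasurable hfg]; rfl
  · rw [AEMeasurable.map_map_of_aemeasurable measurable_snd.aemeasurable hfg]; rfl
  · exact (integral_map (f := fun z : ℝ × ℝ => (z.1 - z.2) ^ 2) hfg (by fun_prop)).symm

lemma norm_sub_sq_eq_integral {F G : Lp ℝ 2 μ} {f g : α → ℝ} (hF : F =ᵐ[μ] f)
    (hG : G =ᵐ[μ] g) : ‖F - G‖ ^ 2 = ∫ a, (f a - g a) ^ 2 ∂μ := by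
  rw [← real_inner_self_eq_norm_sq, L2.inner_def]
  refine integral_congr_ae ?_
  filter_upwards [Lp.coeFn_sub F G, hF, hG] with a hsub hfa hga
  rw [real_inner_self_eq_norm_sq, hsub, Pi.sub_apply, hfa, hga, Real.norm_eq_abs, sq_abs]

lemma W2_map_le_norm_sub {F G : Lp ℝ 2 μ} {f g : α → ℝ} (hF : F =ᵐ[μ] f) (hG : G =ᵐ[μ] g) :
    W2 (μ.map f) (μ.map g) ≤ ‖F - G‖ := by
  rw [W2, ← Real.sqrt_sq (norm_nonneg (F - G)), norm_sub_sq_eq_integral hF hG]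
  exact Real.sqrt_le_sqrt <| W2sq_map_le
    ((Lp.aestronglyMeasurable F).congr hF).aemeasurable
    ((Lp.aestronglyMeasurable G).congr hG).aemeasurable

lemma norm_toLp_quantile'_sub_le_W2 {P Q : Measure ℝ} [IsProbabilityMeasure P]
    [IsProbabilityMeasure Q] (hP : MemLp id 2 P) (hQ : MemLp id 2 Q) :
    ‖(memLp_quantile' hP).toLp _ - (memLp_quantile' hQ).toLp _‖ ≤ W2 P Q := by
  refine Real.le_sqrt_of_sq_le ?_
  rw [norm_sub_sq_eq_integral (MemLp.coeFn_toLp _) (MemLp.coeFn_toLp _)]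
  exact integral_quantile'_sub_sq_le_W2sq P Q hP hQ

lemma coeFn_sum_smul_toLp {E : Type*} [NormedAddCommGroup E] [NormedSpace ℝ E] {p : ENNReal}
    {ι : Type*} (t : Finset ι) (c : ι → ℝ) {f : ι → α → E} (hf : ∀ i, MemLp (f i) p μ) :
    ⇑(∑ i ∈ t, c i • (hf i).toLp (f i)) =ᵐ[μ] fun a => ∑ i ∈ t, c i • f i a := by
  classical
  induction t using Finset.induction_on with
  | empty => simp only [Finset.sum_empty]; exact Lp.coeFn_zero E p μ
  | insert i t hi ih =>
    simp only [Finset.sum_insert hi]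
    filter_upwards [Lp.coeFn_add (c i • (hf i).toLp (f i)) _, Lp.coeFn_smul (c i) ((hf i).toLp _),
      (hf i).coeFn_toLp, ih] with a hadd hsmul hfi hsum
    rw [hadd, Pi.add_apply, hsmul, Pi.smul_apply, hfi, hsum]

end Wasserstein

theorem barycenter_continuity_general
    (k : ℕ)
    (μn : ℕ → Fin k → Measure ℝ) (μ : Fin k → Measure ℝ)
    (hμn : ∀ n s, IsProbabilityMeasure (μn n s)) (hμ : ∀ s, IsProbabilityMeasure (μ s))
    (hμn2 : ∀ n s, MemLp id 2 (μn n s)) (hμ2 : ∀ s, MemLp id 2 (μ s))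
    (πn : ℕ → Fin k → ℝ) (π : Fin k → ℝ)
    (νbarn : ℕ → Measure ℝ)
    (hνbarn : ∀ n, νbarn n = unif01.map (fun u => ∑ s, πn n s * quantile' (μn n s) u))
    (νbar : Measure ℝ)
    (hνbar : νbar = unif01.map (fun u => ∑ s, π s * quantile' (μ s) u))
    (hconv : ∀ s, Tendsto (fun n => W2 (μn n s) (μ s)) atTop (nhds 0))
    (hπconv : ∀ s, Tendsto (fun n => πn n s) atTop (nhds (π s))) :
    Tendsto (fun n => W2 (νbarn n) νbar) atTop (nhds 0) := by
  have hqn n s := @memLp_quantile' _ (hμn n s) (hμn2 n s)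
  have hq s := @memLp_quantile' _ (hμ s) (hμ2 s)
  have hconvLp s : Tendsto (fun n => (hqn n s).toLp _) atTop (𝓝 ((hq s).toLp _)) :=
    tendsto_iff_norm_sub_tendsto_zero.2 <| squeeze_zero (fun _ => norm_nonneg _)
      (fun n => @norm_toLp_quantile'_sub_le_W2 _ _ (hμn n s) (hμ s) (hμn2 n s) (hμ2 s)) (hconv s)
  have hbary : Tendsto (fun n => ∑ s, πn n s • (hqn n s).toLp _) atTop
      (𝓝 (∑ s, π s • (hq s).toLp _)) :=
    tendsto_finsetSum _ fun s _ => (hπconv s).smul (hconvLp s)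
  refine squeeze_zero (fun n => Real.sqrt_nonneg _) (fun n => ?_)
    (tendsto_iff_norm_sub_tendsto_zero.1 hbary)
  rw [hνbarn, hνbar]
  exact W2_map_le_norm_sub (coeFn_sum_smul_toLp _ _ _) (coeFn_sum_smul_toLp _ _ _)

/-- **Continuity of the one-dimensional Wasserstein barycenter** (consistency mechanism
underlying Theorem 3). If `W₂(μ_s⁽ⁿ⁾, μ_s) → 0` and `π_s⁽ⁿ⁾ → π_s` for every `s`, then the
quantile-average barycenters converge: `W₂(ν̄_n, ν̄) → 0`. -/
theorem barycenter_continuity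
    (k : ℕ) (hk : 0 < k)
    (μn : ℕ → Fin k → Measure ℝ) (μ : Fin k → Measure ℝ)
    (hμn : ∀ n s, IsProbabilityMeasure (μn n s)) (hμ : ∀ s, IsProbabilityMeasure (μ s))
    (hμn2 : ∀ n s, MemLp id 2 (μn n s)) (hμ2 : ∀ s, MemLp id 2 (μ s))
    (πn : ℕ → Fin k → ℝ) (π : Fin k → ℝ)
    (hπnpos : ∀ n s, 0 < πn n s) (hπnsum : ∀ n, ∑ s, πn n s = 1)
    (hπpos : ∀ s, 0 < π s) (hπsum : ∑ s, π s = 1)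
    (νbarn : ℕ → Measure ℝ)
    (hνbarn : ∀ n, νbarn n = unif01.map (fun u => ∑ s, πn n s * quantile' (μn n s) u))
    (νbar : Measure ℝ)
    (hνbar : νbar = unif01.map (fun u => ∑ s, π s * quantile' (μ s) u))
    (hconv : ∀ s, Tendsto (fun n => W2 (μn n s) (μ s)) atTop (nhds 0))
    (hπconv : ∀ s, Tendsto (fun n => πn n s) atTop (nhds (π s))) :
    Tendsto (fun n => W2 (νbarn n) νbar) atTop (nhds 0) :=
  barycenter_continuity_general k μn μ hμn hμ hμn2 hμ2 πn π νbarn hνbarn νbar hνbar hconv hπconv
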